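/- arXiv:1905.13420 — 3 statements merged into one kernel-verified Lean document; each statement's English description precedes it below -/
import Mathlib

section
/- (Generalized policy gradient, part I) Suppose the approximate reward decomposes as R̂(τ) = ∑_{α ∈ 𝓘} r̂(s_α, a_α), where 𝓘 is a finite collection of subsets of {0,...,T} and each r̂(s_α, a_α) depends only on states and actions at times in α. Then ∇_θ E_{p_θ}[R̂(τ)] = ∑_{α ∈ 𝓘} E_{p_θ}[ r̂(s_α, a_α) · ∑_{t ∈ Γ_α} ∇_θ log π_θ(a_t|s_t) ], where Γ_α = { t : t ≤ max(α) }. -/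
open scoped BigOperators

/-- The probability of a trajectory `τ = (s_0,a_0,...,s_T,a_T)` in a finite MDP:
the product of the initial distribution `μ`, the policy factors `π θ (a_t|s_t)`
and the transition factors `Tr (s_{t+1}|s_t,a_t)`. -/
noncomputable def trajProb {S A : Type} {d T : ℕ}
    (μ : S → ℝ) (Tr : S → A → S → ℝ)
    (π : EuclideanSpace ℝ (Fin d) → S → A → ℝ)
    (θ : EuclideanSpace ℝ (Fin d)) (τ : Fin (T + 1) → S × A) : ℝ :=
  μ (τ 0).1 * (∏ t : Fin (T + 1), π θ (τ t).1 (τ t).2) *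
    ∏ t : Fin T, Tr (τ t.castSucc).1 (τ t.castSucc).2 (τ t.succ).1

/-- The score `∇_θ log π_θ(a_t|s_t)` at `θ₀`, where `Dπ s a` is the gradient
(Fréchet derivative) of `θ ↦ π θ s a` at `θ₀`. -/
noncomputable def score {S A : Type} {d T : ℕ}
    (π : EuclideanSpace ℝ (Fin d) → S → A → ℝ)
    (Dπ : S → A → (EuclideanSpace ℝ (Fin d) →L[ℝ] ℝ))
    (θ₀ : EuclideanSpace ℝ (Fin d)) (t : Fin (T + 1)) (τ : Fin (T + 1) → S × A) :
    EuclideanSpace ℝ (Fin d) →L[ℝ] ℝ :=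
  (π θ₀ (τ t).1 (τ t).2)⁻¹ • Dπ (τ t).1 (τ t).2

lemma pg_splitAt_symm_eq_update {X : Type} [Nonempty X] {n : ℕ} (k : Fin n)
    (σ : {j : Fin n // j ≠ k} → X) (x : X) :
    (Equiv.funSplitAt k X).symm (x, σ)
      = Function.update ((Equiv.funSplitAt k X).symm (Classical.arbitrary X, σ)) k x := by
  funext j
  rcases eq_or_ne j k with rfl | hj
  · rw [Function.update_self]
    exact dif_pos rfl
  · rw [Function.update_of_ne hj]
    show dite _ _ _ = dite _ _ _
    rw [dif_neg hj, dif_neg hj]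

lemma pg_sum_update_eq {X : Type} [Fintype X] [Nonempty X] {n : ℕ}
    (f g : (Fin n → X) → ℝ) (k : Fin n)
    (h : ∀ τ : Fin n → X, ∑ x : X, f (Function.update τ k x)
        = ∑ x : X, g (Function.update τ k x)) :
    ∑ τ, f τ = ∑ τ, g τ := by
  classical
  rw [← Equiv.sum_comp (Equiv.funSplitAt k X).symm f,
      ← Equiv.sum_comp (Equiv.funSplitAt k X).symm g,
      Fintype.sum_prod_type_right, Fintype.sum_prod_type_right]
  refine Finset.sum_congr rfl fun σ _ => ?_
  refine Eq.trans (Finset.sum_congr rfl fun x _ =>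
      congrArg f (pg_splitAt_symm_eq_update k σ x)) (Eq.trans (h _)
      (Finset.sum_congr rfl fun x _ => (congrArg g (pg_splitAt_symm_eq_update k σ x)).symm))

noncomputable def pgPfun {S A : Type} [Fintype S] [Fintype A] {T : ℕ}
    (μ : S → ℝ) (Tr : S → A → S → ℝ) (P : Fin (T + 1) → S → A → ℝ)
    (τ : Fin (T + 1) → S × A) : ℝ :=
  μ (τ 0).1 * (∏ t : Fin (T + 1), P t (τ t).1 (τ t).2) *
    ∏ t : Fin T, Tr (τ t.castSucc).1 (τ t.castSucc).2 (τ t.succ).1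

noncomputable def pgQfun {S A : Type} [Fintype S] [Fintype A] {T : ℕ}
    (μ : S → ℝ) (Tr : S → A → S → ℝ) (P : Fin (T + 1) → S → A → ℝ) (k : ℕ)
    (τ : Fin (T + 1) → S × A) : ℝ :=
  μ (τ 0).1 *
    (∏ t : Fin (T + 1),
      if (t : ℕ) < k then P t (τ t).1 (τ t).2 else (Fintype.card A : ℝ)⁻¹) *
    ∏ t : Fin T,
      if (t : ℕ) + 1 < k then Tr (τ t.castSucc).1 (τ t.castSucc).2 (τ t.succ).1
      else (Fintype.card S : ℝ)⁻¹

lemma pgQfun_top {S A : Type} [Fintype S] [Fintype A] {T : ℕ}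
    (μ : S → ℝ) (Tr : S → A → S → ℝ) (P : Fin (T + 1) → S → A → ℝ)
    (τ : Fin (T + 1) → S × A) :
    pgQfun μ Tr P (T + 1) τ = pgPfun μ Tr P τ := by
  unfold pgQfun pgPfun
  congr 1
  · congr 1
    exact Finset.prod_congr rfl fun t _ => if_pos t.isLt
  · exact Finset.prod_congr rfl fun t _ => if_pos (by omega)

lemma pgQ_step {S A : Type} [Fintype S] [Fintype A] [Nonempty S] [Nonempty A] {T : ℕ}
    (μ : S → ℝ) (Tr : S → A → S → ℝ) (hTr1 : ∀ s a, ∑ s', Tr s a s' = 1)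
    (P : Fin (T + 1) → S → A → ℝ) (hP1 : ∀ t s, ∑ a, P t s a = 1)
    (u : (Fin (T + 1) → S × A) → ℝ) (k : ℕ) (hk0 : 0 < k) (hkT : k ≤ T)
    (hu : ∀ (τ : Fin (T + 1) → S × A) (x : S × A),
      u (Function.update τ ⟨k, by omega⟩ x) = u τ) :
    ∑ τ, pgQfun μ Tr P (k + 1) τ * u τ = ∑ τ, pgQfun μ Tr P k τ * u τ := by
  classical
  set kf : Fin (T + 1) := ⟨k, by omega⟩ with hkf
  set km : Fin T := ⟨k - 1, by omega⟩ with hkm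
  apply pg_sum_update_eq _ _ kf
  intro τ
  have hsm : km.succ = kf := by
    apply Fin.ext; simp [hkm, hkf]; omega
  have hcm : (km.castSucc : Fin (T + 1)) ≠ kf := by
    simp [Fin.ext_iff, hkm, hkf]; omega
  have h0 : (0 : Fin (T + 1)) ≠ kf := by
    simp [Fin.ext_iff, hkf]; omega
  set C : ℝ := μ (τ 0).1 *
      (∏ t ∈ Finset.univ.erase kf,
        if (t : ℕ) < k then P t (τ t).1 (τ t).2 else (Fintype.card A : ℝ)⁻¹) *
      ∏ t ∈ Finset.univ.erase km,
        if (t : ℕ) + 1 < k then Tr (τ t.castSucc).1 (τ t.castSucc).2 (τ t.succ).1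
        else (Fintype.card S : ℝ)⁻¹ with hC
  have hQ1 : ∀ x : S × A, pgQfun μ Tr P (k + 1) (Function.update τ kf x)
      = (Tr (τ km.castSucc).1 (τ km.castSucc).2 x.1 * P kf x.1 x.2) * C := by
    intro x
    unfold pgQfun
    rw [← Finset.mul_prod_erase Finset.univ _ (Finset.mem_univ kf),
        ← Finset.mul_prod_erase Finset.univ _ (Finset.mem_univ km),
        Function.update_of_ne h0]
    have e1 : (if (kf : ℕ) < k + 1
          then P kf ((Function.update τ kf x) kf).1 ((Function.update τ kf x) kf).2
          else (Fintype.card A : ℝ)⁻¹) = P kf x.1 x.2 := by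
      rw [if_pos (by simp [hkf]), Function.update_self]
    have e2 : (if (km : ℕ) + 1 < k + 1
          then Tr ((Function.update τ kf x) km.castSucc).1
            ((Function.update τ kf x) km.castSucc).2 ((Function.update τ kf x) km.succ).1
          else (Fintype.card S : ℝ)⁻¹)
        = Tr (τ km.castSucc).1 (τ km.castSucc).2 x.1 := by
      rw [if_pos (by simp [hkm]; omega), Function.update_of_ne hcm, hsm, Function.update_self]
    rw [e1, e2]
    have e3 : (∏ t ∈ Finset.univ.erase kf,
          if (t : ℕ) < k + 1
          then P t ((Function.update τ kf x) t).1 ((Function.update τ kf x) t).2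
          else (Fintype.card A : ℝ)⁻¹)
        = ∏ t ∈ Finset.univ.erase kf,
          if (t : ℕ) < k then P t (τ t).1 (τ t).2 else (Fintype.card A : ℝ)⁻¹ := by
      refine Finset.prod_congr rfl fun t ht => ?_
      have htk : (t : ℕ) ≠ k := by
        intro h
        exact (Finset.mem_erase.mp ht).1 (Fin.ext (by simp [hkf, h]))
      rw [Function.update_of_ne (Finset.mem_erase.mp ht).1]
      simp only [show ((t : ℕ) < k + 1) ↔ ((t : ℕ) < k) from by omega]
    have e4 : (∏ t ∈ Finset.univ.erase km,
          if (t : ℕ) + 1 < k + 1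
          then Tr ((Function.update τ kf x) t.castSucc).1
            ((Function.update τ kf x) t.castSucc).2 ((Function.update τ kf x) t.succ).1
          else (Fintype.card S : ℝ)⁻¹)
        = ∏ t ∈ Finset.univ.erase km,
          if (t : ℕ) + 1 < k then Tr (τ t.castSucc).1 (τ t.castSucc).2 (τ t.succ).1
          else (Fintype.card S : ℝ)⁻¹ := by
      refine Finset.prod_congr rfl fun t ht => ?_
      have htm : (t : ℕ) ≠ k - 1 := by
        intro h
        exact (Finset.mem_erase.mp ht).1 (Fin.ext (by simp [hkm, h]))
      by_cases hc : (t : ℕ) + 1 < k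
      · rw [if_pos (by omega), if_pos hc,
          Function.update_of_ne (by simp [Fin.ext_iff, hkf]; omega),
          Function.update_of_ne (by simp [Fin.ext_iff, hkf]; omega)]
      · rw [if_neg (by omega), if_neg hc]
    rw [e3, e4, hC]
    ring
  have hQ2 : ∀ x : S × A, pgQfun μ Tr P k (Function.update τ kf x)
      = ((Fintype.card S : ℝ)⁻¹ * (Fintype.card A : ℝ)⁻¹) * C := by
    intro x
    unfold pgQfun
    rw [← Finset.mul_prod_erase Finset.univ _ (Finset.mem_univ kf),
        ← Finset.mul_prod_erase Finset.univ _ (Finset.mem_univ km),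
        Function.update_of_ne h0]
    have e1 : (if (kf : ℕ) < k
          then P kf ((Function.update τ kf x) kf).1 ((Function.update τ kf x) kf).2
          else (Fintype.card A : ℝ)⁻¹) = (Fintype.card A : ℝ)⁻¹ := by
      rw [if_neg (by simp [hkf])]
    have e2 : (if (km : ℕ) + 1 < k
          then Tr ((Function.update τ kf x) km.castSucc).1
            ((Function.update τ kf x) km.castSucc).2 ((Function.update τ kf x) km.succ).1
          else (Fintype.card S : ℝ)⁻¹) = (Fintype.card S : ℝ)⁻¹ := by
      rw [if_neg (by simp [hkm]; omega)]
    have e3 : (∏ t ∈ Finset.univ.erase kf,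
          if (t : ℕ) < k
          then P t ((Function.update τ kf x) t).1 ((Function.update τ kf x) t).2
          else (Fintype.card A : ℝ)⁻¹)
        = ∏ t ∈ Finset.univ.erase kf,
          if (t : ℕ) < k then P t (τ t).1 (τ t).2 else (Fintype.card A : ℝ)⁻¹ := by
      refine Finset.prod_congr rfl fun t ht => ?_
      rw [Function.update_of_ne (Finset.mem_erase.mp ht).1]
    have e4 : (∏ t ∈ Finset.univ.erase km,
          if (t : ℕ) + 1 < k
          then Tr ((Function.update τ kf x) t.castSucc).1
            ((Function.update τ kf x) t.castSucc).2 ((Function.update τ kf x) t.succ).1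
          else (Fintype.card S : ℝ)⁻¹)
        = ∏ t ∈ Finset.univ.erase km,
          if (t : ℕ) + 1 < k then Tr (τ t.castSucc).1 (τ t.castSucc).2 (τ t.succ).1
          else (Fintype.card S : ℝ)⁻¹ := by
      refine Finset.prod_congr rfl fun t ht => ?_
      by_cases hc : (t : ℕ) + 1 < k
      · rw [if_pos hc, if_pos hc,
          Function.update_of_ne (by simp [Fin.ext_iff, hkf]; omega),
          Function.update_of_ne (by simp [Fin.ext_iff, hkf]; omega)]
      · rw [if_neg hc, if_neg hc]
    rw [e1, e2, e3, e4, hC]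
    ring
  have hsum1 : ∑ x : S × A, Tr (τ km.castSucc).1 (τ km.castSucc).2 x.1 * P kf x.1 x.2 = 1 := by
    rw [Fintype.sum_prod_type]
    refine Eq.trans (Finset.sum_congr rfl fun s' _ => ?_)
      (hTr1 (τ km.castSucc).1 (τ km.castSucc).2)
    show ∑ y : A, Tr (τ km.castSucc).1 (τ km.castSucc).2 s' * P kf s' y = _
    rw [← Finset.mul_sum, hP1 kf s', mul_one]
  have hcS : (Fintype.card S : ℝ) ≠ 0 := Nat.cast_ne_zero.mpr Fintype.card_ne_zero
  have hcA : (Fintype.card A : ℝ) ≠ 0 := Nat.cast_ne_zero.mpr Fintype.card_ne_zero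
  have hsum2 : ∑ _x : S × A, ((Fintype.card S : ℝ)⁻¹ * (Fintype.card A : ℝ)⁻¹) = 1 := by
    rw [Finset.sum_const, Finset.card_univ, Fintype.card_prod, nsmul_eq_mul]
    push_cast
    field_simp
  calc ∑ x : S × A, pgQfun μ Tr P (k + 1) (Function.update τ kf x) * u (Function.update τ kf x)
      = ∑ x : S × A, (Tr (τ km.castSucc).1 (τ km.castSucc).2 x.1 * P kf x.1 x.2) * (C * u τ) := by
        refine Finset.sum_congr rfl fun x _ => ?_
        rw [hQ1 x, hu τ x]; ring
    _ = 1 * (C * u τ) := by rw [← Finset.sum_mul, hsum1]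
    _ = ∑ x : S × A, ((Fintype.card S : ℝ)⁻¹ * (Fintype.card A : ℝ)⁻¹) * (C * u τ) := by
        rw [← Finset.sum_mul, hsum2]
    _ = ∑ x : S × A, pgQfun μ Tr P k (Function.update τ kf x) * u (Function.update τ kf x) := by
        refine Finset.sum_congr rfl fun x _ => ?_
        rw [hQ2 x, hu τ x]; ring

lemma pgQ_chain {S A : Type} [Fintype S] [Fintype A] [Nonempty S] [Nonempty A] {T : ℕ}
    (μ : S → ℝ) (Tr : S → A → S → ℝ) (hTr1 : ∀ s a, ∑ s', Tr s a s' = 1)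
    (P : Fin (T + 1) → S → A → ℝ) (hP1 : ∀ t s, ∑ a, P t s a = 1)
    (u : (Fin (T + 1) → S × A) → ℝ) (m : ℕ)
    (hu : ∀ (τ : Fin (T + 1) → S × A) (j : Fin (T + 1)) (x : S × A),
      m < (j : ℕ) → u (Function.update τ j x) = u τ) :
    ∀ k, m + 1 ≤ k → k ≤ T + 1 →
      ∑ τ, pgQfun μ Tr P k τ * u τ = ∑ τ, pgQfun μ Tr P (m + 1) τ * u τ := by
  intro k hk hk'
  induction k, hk using Nat.le_induction with
  | base => rfl
  | succ n hn ih =>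
    have hnT : n ≤ T := by omega
    rw [pgQ_step μ Tr hTr1 P hP1 u n (by omega) hnT
      (fun τ x => hu τ ⟨n, by omega⟩ x (by exact Nat.lt_of_succ_le hn))]
    exact ih (by omega)

lemma pgP_marg {S A : Type} [Fintype S] [Fintype A] [Nonempty S] [Nonempty A] {T : ℕ}
    (μ : S → ℝ) (Tr : S → A → S → ℝ) (hTr1 : ∀ s a, ∑ s', Tr s a s' = 1)
    (P P' : Fin (T + 1) → S → A → ℝ)
    (hP1 : ∀ t s, ∑ a, P t s a = 1) (hP'1 : ∀ t s, ∑ a, P' t s a = 1)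
    (u : (Fin (T + 1) → S × A) → ℝ) (m : ℕ)
    (hagree : ∀ t : Fin (T + 1), (t : ℕ) ≤ m → P t = P' t)
    (hu : ∀ (τ : Fin (T + 1) → S × A) (j : Fin (T + 1)) (x : S × A),
      m < (j : ℕ) → u (Function.update τ j x) = u τ) :
    ∑ τ, pgPfun μ Tr P τ * u τ = ∑ τ, pgPfun μ Tr P' τ * u τ := by
  rcases le_or_gt (m + 1) (T + 1) with hmT | hmT
  · calc ∑ τ, pgPfun μ Tr P τ * u τ
        = ∑ τ, pgQfun μ Tr P (T + 1) τ * u τ :=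
          (Finset.sum_congr rfl fun τ _ => by rw [pgQfun_top]).symm
      _ = ∑ τ, pgQfun μ Tr P (m + 1) τ * u τ :=
          pgQ_chain μ Tr hTr1 P hP1 u m hu (T + 1) hmT le_rfl
      _ = ∑ τ, pgQfun μ Tr P' (m + 1) τ * u τ := by
          refine Finset.sum_congr rfl fun τ _ => ?_
          congr 1
          unfold pgQfun
          congr 2
          refine Finset.prod_congr rfl fun t _ => ?_
          by_cases h : (t : ℕ) < m + 1
          · rw [if_pos h, if_pos h, hagree t (by omega)]
          · rw [if_neg h, if_neg h]
      _ = ∑ τ, pgQfun μ Tr P' (T + 1) τ * u τ :=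
          (pgQ_chain μ Tr hTr1 P' hP'1 u m hu (T + 1) hmT le_rfl).symm
      _ = ∑ τ, pgPfun μ Tr P' τ * u τ :=
          Finset.sum_congr rfl fun τ _ => by rw [pgQfun_top]
  · -- m ≥ T + 1 : the policies agree everywhere
    refine Finset.sum_congr rfl fun τ _ => ?_
    congr 1
    unfold pgPfun
    congr 2
    exact Finset.prod_congr rfl fun t _ => by rw [hagree t (by omega)]

theorem stmt2 {S A : Type} [Fintype S] [Fintype A] {d T : ℕ}
    (μ : S → ℝ) (Tr : S → A → S → ℝ)
    (π : EuclideanSpace ℝ (Fin d) → S → A → ℝ)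
    (Dπ : S → A → (EuclideanSpace ℝ (Fin d) →L[ℝ] ℝ))
    (θ₀ : EuclideanSpace ℝ (Fin d))
    (hμ0 : ∀ s, 0 ≤ μ s) (hμ1 : ∑ s, μ s = 1)
    (hTr0 : ∀ s a s', 0 ≤ Tr s a s') (hTr1 : ∀ s a, ∑ s', Tr s a s' = 1)
    (hπpos : ∀ θ s a, 0 < π θ s a) (hπ1 : ∀ θ s, ∑ a, π θ s a = 1)
    (hdiff : ∀ s a, HasFDerivAt (fun θ => π θ s a) (Dπ s a) θ₀)
    (𝓘 : Finset (Finset (Fin (T + 1))))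
    (hne : ∀ α ∈ 𝓘, α.Nonempty)
    (rhat : Finset (Fin (T + 1)) → (Fin (T + 1) → S × A) → ℝ)
    (hloc : ∀ α ∈ 𝓘, ∀ τ τ' : Fin (T + 1) → S × A,
      (∀ i ∈ α, τ i = τ' i) → rhat α τ = rhat α τ') :
    HasFDerivAt (fun θ => ∑ τ : Fin (T + 1) → S × A,
        trajProb μ Tr π θ τ * ∑ α ∈ 𝓘, rhat α τ)
      (∑ α ∈ 𝓘, ∑ τ : Fin (T + 1) → S × A,
        (trajProb μ Tr π θ₀ τ * rhat α τ) •
          ∑ t ∈ Finset.univ.filter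
              (fun t : Fin (T + 1) => (t : WithBot (Fin (T + 1))) ≤ α.max),
            score π Dπ θ₀ t τ) θ₀ := by
  classical
  haveI nS : Nonempty S := by
    by_contra h
    rw [not_nonempty_iff] at h
    rw [Finset.univ_eq_empty, Finset.sum_empty] at hμ1
    norm_num at hμ1
  haveI nA : Nonempty A := by
    by_contra h
    rw [not_nonempty_iff] at h
    have := hπ1 θ₀ (Classical.arbitrary S)
    rw [Finset.univ_eq_empty, Finset.sum_empty] at this
    norm_num at this
  have key : ∀ α ∈ 𝓘, HasFDerivAt
      (fun θ => ∑ τ : Fin (T + 1) → S × A, trajProb μ Tr π θ τ * rhat α τ)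
      (∑ τ : Fin (T + 1) → S × A, (trajProb μ Tr π θ₀ τ * rhat α τ) •
        ∑ t ∈ Finset.univ.filter
            (fun t : Fin (T + 1) => (t : WithBot (Fin (T + 1))) ≤ α.max),
          score π Dπ θ₀ t τ) θ₀ := by
    intro α hα
    have hαne := hne α hα
    set mf : Fin (T + 1) := α.max' hαne with hmf
    set m : ℕ := (mf : ℕ) with hm
    set Γ : Finset (Fin (T + 1)) := Finset.univ.filter (fun t => (t : ℕ) ≤ m) with hΓ
    have hΓeq : Finset.univ.filter
        (fun t : Fin (T + 1) => (t : WithBot (Fin (T + 1))) ≤ α.max) = Γ := by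
      rw [hΓ]
      apply Finset.filter_congr
      intro t _
      rw [← Finset.coe_max' hαne, ← hmf, WithBot.coe_le_coe]
      exact Fin.le_def
    rw [hΓeq]
    have hu : ∀ (τ : Fin (T + 1) → S × A) (j : Fin (T + 1)) (x : S × A),
        m < (j : ℕ) → rhat α (Function.update τ j x) = rhat α τ := by
      intro τ j x hj
      refine hloc α hα _ _ fun i hi => ?_
      have him : (i : ℕ) ≤ m := Fin.le_def.mp (Finset.le_max' α i hi)
      have hij : i ≠ j := by
        intro hij
        rw [hij] at him
        omega
      exact Function.update_of_ne hij x τ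
    set K : (Fin (T + 1) → S × A) → ℝ := fun τ =>
      μ (τ 0).1 * (∏ t ∈ Finset.univ.filter (fun t : Fin (T + 1) => ¬ (t : ℕ) ≤ m),
          π θ₀ (τ t).1 (τ t).2) *
        (∏ t : Fin T, Tr (τ t.castSucc).1 (τ t.castSucc).2 (τ t.succ).1) * rhat α τ
      with hK
    have hfun : ∀ θ, ∑ τ : Fin (T + 1) → S × A, trajProb μ Tr π θ τ * rhat α τ
        = ∑ τ : Fin (T + 1) → S × A, K τ * ∏ t ∈ Γ, π θ (τ t).1 (τ t).2 := by
      intro θ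
      have h1 : ∑ τ : Fin (T + 1) → S × A, trajProb μ Tr π θ τ * rhat α τ
          = ∑ τ, pgPfun μ Tr (fun t s a => if (t : ℕ) ≤ m then π θ s a else π θ₀ s a) τ
              * rhat α τ := by
        refine pgP_marg μ Tr hTr1 (fun _ => π θ) _ (fun t s => hπ1 θ s)
          (fun t s => ?_) (rhat α) m (fun t ht => by simp [ht]) hu
        · by_cases h : (t : ℕ) ≤ m <;> simp [h, hπ1 θ, hπ1 θ₀]
      rw [h1]
      refine Finset.sum_congr rfl fun τ _ => ?_
      unfold pgPfun
      rw [Finset.prod_ite (fun t => π θ (τ t).1 (τ t).2) (fun t => π θ₀ (τ t).1 (τ t).2)]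
      rw [hK, hΓ]
      ring
    have hfeq : (fun θ => ∑ τ : Fin (T + 1) → S × A, trajProb μ Tr π θ τ * rhat α τ)
        = fun θ => ∑ τ : Fin (T + 1) → S × A, K τ * ∏ t ∈ Γ, π θ (τ t).1 (τ t).2 :=
      funext hfun
    rw [hfeq]
    have hscal : ∀ (τ : Fin (T + 1) → S × A), ∀ t ∈ Γ,
        trajProb μ Tr π θ₀ τ * rhat α τ * (π θ₀ (τ t).1 (τ t).2)⁻¹
          = K τ * ∏ j ∈ Γ.erase t, π θ₀ (τ j).1 (τ j).2 := by
      intro τ t ht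
      have hπt : π θ₀ (τ t).1 (τ t).2 ≠ 0 := (hπpos θ₀ _ _).ne'
      have h1 : (∏ j ∈ Γ.erase t, π θ₀ (τ j).1 (τ j).2) * π θ₀ (τ t).1 (τ t).2
          = ∏ j ∈ Γ, π θ₀ (τ j).1 (τ j).2 := Finset.prod_erase_mul _ _ ht
      have h2 : (∏ j ∈ Γ, π θ₀ (τ j).1 (τ j).2) *
            ∏ j ∈ Finset.univ.filter (fun t : Fin (T + 1) => ¬ (t : ℕ) ≤ m),
              π θ₀ (τ j).1 (τ j).2
          = ∏ j : Fin (T + 1), π θ₀ (τ j).1 (τ j).2 := by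
        rw [hΓ]
        exact Finset.prod_filter_mul_prod_filter_not Finset.univ _ _
      have h3 : trajProb μ Tr π θ₀ τ * rhat α τ
          = (K τ * ∏ j ∈ Γ.erase t, π θ₀ (τ j).1 (τ j).2) * π θ₀ (τ t).1 (τ t).2 := by
        rw [hK, trajProb, ← h2, ← h1]
        ring
      rw [h3, mul_inv_cancel_right₀ hπt]
    have hDeq : ∑ τ : Fin (T + 1) → S × A, (trajProb μ Tr π θ₀ τ * rhat α τ) •
          ∑ t ∈ Γ, score π Dπ θ₀ t τ
        = ∑ τ : Fin (T + 1) → S × A, K τ •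
          ∑ t ∈ Γ, (∏ j ∈ Γ.erase t, π θ₀ (τ j).1 (τ j).2) • Dπ (τ t).1 (τ t).2 := by
      refine Finset.sum_congr rfl fun τ _ => ?_
      rw [Finset.smul_sum, Finset.smul_sum]
      refine Finset.sum_congr rfl fun t ht => ?_
      rw [score, smul_smul, smul_smul, hscal τ t ht]
    rw [hDeq]
    exact HasFDerivAt.fun_sum fun τ _ =>
      HasFDerivAt.const_mul (HasFDerivAt.finset_prod fun t _ => hdiff (τ t).1 (τ t).2) (K τ)
  have funeq : (fun θ => ∑ τ : Fin (T + 1) → S × A,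
        trajProb μ Tr π θ τ * ∑ α ∈ 𝓘, rhat α τ)
      = fun θ => ∑ α ∈ 𝓘, ∑ τ : Fin (T + 1) → S × A, trajProb μ Tr π θ τ * rhat α τ := by
    funext θ
    simp_rw [Finset.mul_sum]
    exact Finset.sum_comm
  rw [funeq]
  exact HasFDerivAt.fun_sum fun α hα => key α hα
end

section
/- (Generalized policy gradient, part II) Under the same setting, defining the generalized Q-function Q_t(τ) = ∑_{α ∈ Γ_t*} r̂(s_α, a_α) with Γ_t* = { α ∈ 𝓘 : max(α) ≥ t }, one has ∇_θ E_{p_θ}[R̂(τ)] = E_{p_θ}[ ∑_{t=0}^{T} Q_t(τ) ∇_θ log π_θ(a_t|s_t) ]. -/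
open scoped BigOperators

open Finset

/-- Partial trajectory weight: all factors of `trajProb` except the policy factor at time `t`,
restricted to coordinates `≤ n`. -/
noncomputable def pw {S A : Type} [Fintype S] [Fintype A] {d T : ℕ}
    (μ : S → ℝ) (Tr : S → A → S → ℝ)
    (π : EuclideanSpace ℝ (Fin d) → S → A → ℝ)
    (θ₀ : EuclideanSpace ℝ (Fin d)) (t : Fin (T + 1)) (n : ℕ)
    (τ : Fin (T + 1) → S × A) : ℝ :=
  μ (τ 0).1 * (∏ i ∈ univ.filter (fun i : Fin (T + 1) => (i : ℕ) ≤ n ∧ i ≠ t),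
      π θ₀ (τ i).1 (τ i).2) *
    ∏ j ∈ univ.filter (fun j : Fin T => (j : ℕ) < n),
      Tr (τ j.castSucc).1 (τ j.castSucc).2 (τ j.succ).1

theorem pw_congr {S A : Type} [Fintype S] [Fintype A] {d T : ℕ}
    (μ : S → ℝ) (Tr : S → A → S → ℝ)
    (π : EuclideanSpace ℝ (Fin d) → S → A → ℝ)
    (θ₀ : EuclideanSpace ℝ (Fin d)) (t : Fin (T + 1)) (n : ℕ)
    (τ τ' : Fin (T + 1) → S × A)
    (h1 : ∀ i : Fin (T + 1), (i : ℕ) ≤ n → i ≠ t → τ i = τ' i)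
    (h2 : (τ t).1 = (τ' t).1)
    (h3 : (t : ℕ) < n → (τ t).2 = (τ' t).2) :
    pw μ Tr π θ₀ t n τ = pw μ Tr π θ₀ t n τ' := by
  unfold pw
  have key : ∀ i : Fin (T + 1), (i : ℕ) ≤ n → (τ i).1 = (τ' i).1 := by
    intro i hi
    by_cases hit : i = t
    · subst hit; exact h2
    · rw [h1 i hi hit]
  congr 1
  · congr 1
    · by_cases h0 : (0 : Fin (T + 1)) = t
      · rw [key 0 (by simp)]
      · rw [h1 0 (by simp) h0]
    · refine Finset.prod_congr rfl fun i hi => ?_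
      simp only [mem_filter, mem_univ, true_and] at hi
      rw [h1 i hi.1 hi.2]
  · refine Finset.prod_congr rfl fun j hj => ?_
    simp only [mem_filter, mem_univ, true_and] at hj
    have hc : ((j.castSucc : Fin (T + 1)) : ℕ) = (j : ℕ) := rfl
    have hs : ((j.succ : Fin (T + 1)) : ℕ) = (j : ℕ) + 1 := rfl
    have hcast : τ j.castSucc = τ' j.castSucc ∨
        ((τ j.castSucc).1 = (τ' j.castSucc).1 ∧ (τ j.castSucc).2 = (τ' j.castSucc).2) := by
      by_cases hit : j.castSucc = t
      · right
        refine ⟨(hit ▸ h2), hit ▸ h3 ?_⟩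
        rw [← hit, hc]; omega
      · left; exact h1 _ (by omega) hit
    have h4 : (τ j.castSucc).1 = (τ' j.castSucc).1 ∧ (τ j.castSucc).2 = (τ' j.castSucc).2 := by
      rcases hcast with h | h
      · exact ⟨by rw [h], by rw [h]⟩
      · exact h
    rw [h4.1, h4.2, key j.succ (by omega)]

theorem sum_Dpi_zero {S A : Type} [Fintype A] {d : ℕ}
    (π : EuclideanSpace ℝ (Fin d) → S → A → ℝ)
    (Dπ : S → A → (EuclideanSpace ℝ (Fin d) →L[ℝ] ℝ))
    (θ₀ : EuclideanSpace ℝ (Fin d))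
    (hπ1 : ∀ θ s, ∑ a, π θ s a = 1)
    (hdiff : ∀ s a, HasFDerivAt (fun θ => π θ s a) (Dπ s a) θ₀) (s : S) :
    ∑ a, Dπ s a = 0 := by
  have h1 : HasFDerivAt (fun θ => ∑ a, π θ s a) (∑ a, Dπ s a) θ₀ :=
    HasFDerivAt.fun_sum (fun a _ => hdiff s a)
  have h2 : (fun θ => ∑ a, π θ s a) = fun _ => (1 : ℝ) := funext fun θ => hπ1 θ s
  rw [h2] at h1
  exact h1.unique (hasFDerivAt_const 1 θ₀)

theorem pw_sum_zero {S A : Type} [Fintype S] [Fintype A] {d T : ℕ}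
    (μ : S → ℝ) (Tr : S → A → S → ℝ)
    (π : EuclideanSpace ℝ (Fin d) → S → A → ℝ)
    (Dπ : S → A → (EuclideanSpace ℝ (Fin d) →L[ℝ] ℝ))
    (θ₀ : EuclideanSpace ℝ (Fin d))
    (hTr1 : ∀ s a, ∑ s', Tr s a s' = 1) (hπ1 : ∀ θ s, ∑ a, π θ s a = 1)
    (hdiff : ∀ s a, HasFDerivAt (fun θ => π θ s a) (Dπ s a) θ₀)
    (hS : Nonempty S) (hA : Nonempty A)
    (t : Fin (T + 1)) (f : (Fin (T + 1) → S × A) → ℝ)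
    (hf : ∀ τ τ' : Fin (T + 1) → S × A, (∀ i : Fin (T + 1), i < t → τ i = τ' i) → f τ = f τ')
    (n : ℕ) (htn : (t : ℕ) ≤ n) (hnT : n ≤ T) :
    ∑ τ : Fin (T + 1) → S × A,
      pw μ Tr π θ₀ t n τ • (f τ • Dπ (τ t).1 (τ t).2) = 0 := by
  classical
  have hSA : Nonempty (S × A) := ⟨(Classical.arbitrary S, Classical.arbitrary A)⟩
  revert hnT
  induction n, htn using Nat.le_induction with
  | base =>
    intro hnT
    set e := Equiv.funSplitAt t (S × A) with he
    rw [← Equiv.sum_comp e.symm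
      (fun τ => pw μ Tr π θ₀ t t τ • (f τ • Dπ (τ t).1 (τ t).2))]
    rw [Fintype.sum_prod_type]
    have hsame : ∀ (x : S × A) (g : {j : Fin (T+1) // j ≠ t} → S × A), e.symm (x, g) t = x := by
      intro x g; simp [he, Equiv.funSplitAt, Equiv.piSplitAt]
    have hne : ∀ (x : S × A) (g : {j : Fin (T+1) // j ≠ t} → S × A) (j : Fin (T+1))
        (h : j ≠ t), e.symm (x, g) j = g ⟨j, h⟩ := by
      intro x g j h; simp [he, Equiv.funSplitAt, Equiv.piSplitAt, h]
    rw [Fintype.sum_prod_type]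
    refine Finset.sum_eq_zero fun s _ => ?_
    rw [Finset.sum_comm]
    refine Finset.sum_eq_zero fun g _ => ?_
    set a₀ := Classical.arbitrary A
    set ρ := e.symm ((s, a₀), g) with hρ
    have hagree : ∀ (a : A) (i : Fin (T+1)), i ≠ t → e.symm ((s, a), g) i = ρ i := by
      intro a i h; rw [hne _ _ _ h, hρ, hne _ _ _ h]
    have hW : ∀ a : A, pw μ Tr π θ₀ t t (e.symm ((s, a), g)) = pw μ Tr π θ₀ t t ρ := by
      intro a
      refine pw_congr μ Tr π θ₀ t t _ _ (fun i _ h => hagree a i h) ?_ (by omega)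
      rw [hsame, hρ, hsame]
    have hfa : ∀ a : A, f (e.symm ((s, a), g)) = f ρ := by
      intro a
      exact hf _ _ fun i hi => hagree a i (Fin.ne_of_lt hi)
    calc ∑ a : A, pw μ Tr π θ₀ t t (e.symm ((s, a), g)) •
          (f (e.symm ((s, a), g)) • Dπ ((e.symm ((s, a), g)) t).1 ((e.symm ((s, a), g)) t).2)
        = ∑ a : A, (pw μ Tr π θ₀ t t ρ * f ρ) • Dπ s a := by
          refine Finset.sum_congr rfl fun a _ => ?_
          rw [hW, hfa, hsame, smul_smul]
      _ = (pw μ Tr π θ₀ t t ρ * f ρ) • ∑ a : A, Dπ s a := by rw [Finset.smul_sum]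
      _ = 0 := by rw [sum_Dpi_zero π Dπ θ₀ hπ1 hdiff s, smul_zero]
  | succ n hn ih =>
    intro hnT
    have hnT' : n ≤ T := by omega
    set c : Fin (T + 1) := ⟨n + 1, by omega⟩ with hc
    set m : Fin T := ⟨n, by omega⟩ with hm
    have hcv : (c : ℕ) = n + 1 := rfl
    have hmc : (m.castSucc : ℕ) = n := rfl
    have hms : m.succ = c := by ext; simp [hm, hc]
    -- factorization of pw (n+1)
    have hfact : ∀ τ : Fin (T + 1) → S × A, pw μ Tr π θ₀ t (n + 1) τ =
        pw μ Tr π θ₀ t n τ * π θ₀ (τ c).1 (τ c).2 *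
          Tr (τ m.castSucc).1 (τ m.castSucc).2 (τ c).1 := by
      intro τ
      have hP : univ.filter (fun i : Fin (T + 1) => (i : ℕ) ≤ n + 1 ∧ i ≠ t)
          = insert c (univ.filter (fun i : Fin (T + 1) => (i : ℕ) ≤ n ∧ i ≠ t)) := by
        ext i
        simp only [mem_filter, mem_univ, true_and, mem_insert, Fin.ext_iff, hcv, ne_eq]
        omega
      have hPc : c ∉ univ.filter (fun i : Fin (T + 1) => (i : ℕ) ≤ n ∧ i ≠ t) := by
        simp [hcv]
      have hQ : univ.filter (fun j : Fin T => (j : ℕ) < n + 1)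
          = insert m (univ.filter (fun j : Fin T => (j : ℕ) < n)) := by
        ext j
        simp only [mem_filter, mem_univ, true_and, mem_insert, Fin.ext_iff]
        have hmv : (m : ℕ) = n := rfl
        omega
      have hQm : m ∉ univ.filter (fun j : Fin T => (j : ℕ) < n) := by simp [hm]
      unfold pw
      rw [hP, hQ, Finset.prod_insert hPc, Finset.prod_insert hQm, hms]
      ring
    set e := Equiv.funSplitAt c (S × A) with he
    have hsame : ∀ (x : S × A) (g : {j : Fin (T+1) // j ≠ c} → S × A), e.symm (x, g) c = x := by
      intro x g; simp [he, Equiv.funSplitAt, Equiv.piSplitAt]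
    have hne : ∀ (x : S × A) (g : {j : Fin (T+1) // j ≠ c} → S × A) (j : Fin (T+1))
        (h : j ≠ c), e.symm (x, g) j = g ⟨j, h⟩ := by
      intro x g j h; simp [he, Equiv.funSplitAt, Equiv.piSplitAt, h]
    set x₀ := Classical.arbitrary (S × A)
    have htc : t ≠ c := by
      intro h; rw [Fin.ext_iff, hcv] at h; omega
    have hmcc : m.castSucc ≠ c := by
      intro h; rw [Fin.ext_iff, hcv, hmc] at h; omega
    have hic : ∀ i : Fin (T + 1), (i : ℕ) ≤ n → i ≠ c := by
      intro i hi hh; rw [hh, hcv] at hi; omega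
    have hitc : ∀ i : Fin (T + 1), i < t → i ≠ c := by
      intro i hi hh
      have h2 : (i : ℕ) < (t : ℕ) := hi
      rw [hh, hcv] at h2; omega
    -- per-g quantities
    set ρ : ({j : Fin (T+1) // j ≠ c} → S × A) → (Fin (T+1) → S × A) :=
      fun g => e.symm (x₀, g) with hρ
    have hagree : ∀ (x : S × A) g (i : Fin (T+1)), i ≠ c → e.symm (x, g) i = ρ g i := by
      intro x g i h
      show e.symm (x, g) i = e.symm (x₀, g) i
      rw [hne x g i h, hne x₀ g i h]
    have hWa : ∀ (x : S × A) g, pw μ Tr π θ₀ t n (e.symm (x, g)) = pw μ Tr π θ₀ t n (ρ g) := by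
      intro x g
      have ht' : e.symm (x, g) t = ρ g t := hagree x g t htc
      exact pw_congr μ Tr π θ₀ t n _ _
        (fun i hi _ => hagree x g i (hic i hi))
        (by rw [ht']) (fun _ => by rw [ht'])
    have hfa : ∀ (x : S × A) g, f (e.symm (x, g)) = f (ρ g) := by
      intro x g
      exact hf _ _ fun i hi => hagree x g i (hitc i hi)
    have hta : ∀ (x : S × A) g, e.symm (x, g) t = ρ g t := fun x g => hagree x g t htc
    have hma : ∀ (x : S × A) g, e.symm (x, g) m.castSucc = ρ g m.castSucc :=
      fun x g => hagree x g m.castSucc hmcc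
    -- split sum
    rw [← Equiv.sum_comp e.symm
      (fun τ => pw μ Tr π θ₀ t (n+1) τ • (f τ • Dπ (τ t).1 (τ t).2))]
    rw [Fintype.sum_prod_type]
    -- rewrite each term
    have hterm : ∀ (x : S × A) g,
        pw μ Tr π θ₀ t (n+1) (e.symm (x, g)) •
          (f (e.symm (x, g)) • Dπ ((e.symm (x, g)) t).1 ((e.symm (x, g)) t).2)
        = (π θ₀ x.1 x.2 * Tr (ρ g m.castSucc).1 (ρ g m.castSucc).2 x.1) •
            (pw μ Tr π θ₀ t n (ρ g) • (f (ρ g) • Dπ ((ρ g) t).1 ((ρ g) t).2)) := by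
      intro x g
      rw [hfact, hWa, hfa, hta, hsame, hma, smul_smul, smul_smul, smul_smul]
      ring_nf
    simp only [hterm]
    -- now sum over x
    have hIH := ih hnT'
    rw [← Equiv.sum_comp e.symm
      (fun τ => pw μ Tr π θ₀ t n τ • (f τ • Dπ (τ t).1 (τ t).2))] at hIH
    rw [Fintype.sum_prod_type] at hIH
    have hIH2 : ∀ x : S × A, ∑ g, pw μ Tr π θ₀ t n (e.symm (x, g)) •
        (f (e.symm (x, g)) • Dπ ((e.symm (x, g)) t).1 ((e.symm (x, g)) t).2)
        = ∑ g, pw μ Tr π θ₀ t n (ρ g) • (f (ρ g) • Dπ ((ρ g) t).1 ((ρ g) t).2) := by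
      intro x
      exact Finset.sum_congr rfl fun g _ => by rw [hWa, hfa, hta]
    simp only [hIH2] at hIH
    rw [Finset.sum_const, ← Nat.cast_smul_eq_nsmul ℝ] at hIH
    have hcard : ((Fintype.card (S × A) : ℝ)) ≠ 0 := by
      exact_mod_cast (Fintype.card_ne_zero : Fintype.card (S × A) ≠ 0)
    have hHg : ∑ g, pw μ Tr π θ₀ t n (ρ g) • (f (ρ g) • Dπ ((ρ g) t).1 ((ρ g) t).2) = 0 :=
      (smul_eq_zero.mp hIH).resolve_left hcard
    rw [Finset.sum_comm]
    calc ∑ g, ∑ x : S × A, (π θ₀ x.1 x.2 * Tr (ρ g m.castSucc).1 (ρ g m.castSucc).2 x.1) •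
          (pw μ Tr π θ₀ t n (ρ g) • (f (ρ g) • Dπ ((ρ g) t).1 ((ρ g) t).2))
        = ∑ g, pw μ Tr π θ₀ t n (ρ g) • (f (ρ g) • Dπ ((ρ g) t).1 ((ρ g) t).2) := by
          refine Finset.sum_congr rfl fun g _ => ?_
          rw [← Finset.sum_smul]
          have hone : ∑ x : S × A, π θ₀ x.1 x.2 * Tr (ρ g m.castSucc).1 (ρ g m.castSucc).2 x.1
              = 1 := by
            rw [Fintype.sum_prod_type]
            have h2 : ∀ s : S, ∑ a : A, π θ₀ s a * Tr (ρ g m.castSucc).1 (ρ g m.castSucc).2 s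
                = Tr (ρ g m.castSucc).1 (ρ g m.castSucc).2 s := by
              intro s; rw [← Finset.sum_mul, hπ1, one_mul]
            simp_rw [h2]
            exact hTr1 _ _
          rw [hone, one_smul]
      _ = 0 := hHg

theorem stmt3 {S A : Type} [Fintype S] [Fintype A] {d T : ℕ}
    (μ : S → ℝ) (Tr : S → A → S → ℝ)
    (π : EuclideanSpace ℝ (Fin d) → S → A → ℝ)
    (Dπ : S → A → (EuclideanSpace ℝ (Fin d) →L[ℝ] ℝ))
    (θ₀ : EuclideanSpace ℝ (Fin d))
    (hμ0 : ∀ s, 0 ≤ μ s) (hμ1 : ∑ s, μ s = 1)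
    (hTr0 : ∀ s a s', 0 ≤ Tr s a s') (hTr1 : ∀ s a, ∑ s', Tr s a s' = 1)
    (hπpos : ∀ θ s a, 0 < π θ s a) (hπ1 : ∀ θ s, ∑ a, π θ s a = 1)
    (hdiff : ∀ s a, HasFDerivAt (fun θ => π θ s a) (Dπ s a) θ₀)
    (𝓘 : Finset (Finset (Fin (T + 1))))
    (hne : ∀ α ∈ 𝓘, α.Nonempty)
    (rhat : Finset (Fin (T + 1)) → (Fin (T + 1) → S × A) → ℝ)
    (hloc : ∀ α ∈ 𝓘, ∀ τ τ' : Fin (T + 1) → S × A,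
      (∀ i ∈ α, τ i = τ' i) → rhat α τ = rhat α τ') :
    HasFDerivAt (fun θ => ∑ τ : Fin (T + 1) → S × A,
        trajProb μ Tr π θ τ * ∑ α ∈ 𝓘, rhat α τ)
      (∑ τ : Fin (T + 1) → S × A, trajProb μ Tr π θ₀ τ •
        ∑ t : Fin (T + 1),
          (∑ α ∈ 𝓘.filter (fun α => (t : WithBot (Fin (T + 1))) ≤ α.max), rhat α τ) •
            score π Dπ θ₀ t τ) θ₀ := by
  classical
  have hS : Nonempty S := by
    by_contra h
    rw [not_nonempty_iff] at h
    simp at hμ1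
  have hA : Nonempty A := by
    by_contra h
    rw [not_nonempty_iff] at h
    have := hπ1 θ₀ (Classical.arbitrary S)
    simp at this
  -- abbreviations
  set R : (Fin (T + 1) → S × A) → ℝ := fun τ => ∑ α ∈ 𝓘, rhat α τ with hR
  set C2 : (Fin (T + 1) → S × A) → ℝ :=
    fun τ => ∏ j : Fin T, Tr (τ j.castSucc).1 (τ j.castSucc).2 (τ j.succ).1 with hC2
  set DP : (Fin (T + 1) → S × A) → (EuclideanSpace ℝ (Fin d) →L[ℝ] ℝ) :=
    fun τ => ∑ i : Fin (T + 1),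
      (∏ j ∈ univ.erase i, π θ₀ (τ j).1 (τ j).2) • Dπ (τ i).1 (τ i).2 with hDP
  -- filter identities
  have hfe : ∀ t : Fin (T + 1),
      univ.filter (fun i : Fin (T + 1) => (i : ℕ) ≤ T ∧ i ≠ t) = univ.erase t := by
    intro t; ext i
    simp only [mem_filter, mem_univ, true_and, mem_erase, and_true]
    exact ⟨fun h => h.2, fun h => ⟨i.is_le, h⟩⟩
  have hfu : univ.filter (fun j : Fin T => (j : ℕ) < T) = (univ : Finset (Fin T)) := by
    ext j; simp [j.is_lt]
  have hpw_eq : ∀ (t : Fin (T + 1)) (τ : Fin (T + 1) → S × A),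
      pw μ Tr π θ₀ t T τ
        = μ (τ 0).1 * (∏ j ∈ univ.erase t, π θ₀ (τ j).1 (τ j).2) * C2 τ := by
    intro t τ; unfold pw; rw [hfe t, hfu]
  have hpwtraj : ∀ (t : Fin (T + 1)) (τ : Fin (T + 1) → S × A),
      trajProb μ Tr π θ₀ τ = π θ₀ (τ t).1 (τ t).2 * pw μ Tr π θ₀ t T τ := by
    intro t τ
    rw [hpw_eq]
    unfold trajProb
    rw [← Finset.mul_prod_erase univ (fun i => π θ₀ (τ i).1 (τ i).2) (mem_univ t)]
    ring
  -- the basic derivative computation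
  have hD : HasFDerivAt (fun θ => ∑ τ : Fin (T + 1) → S × A, trajProb μ Tr π θ τ * R τ)
      (∑ τ : Fin (T + 1) → S × A, R τ • (C2 τ • (μ (τ 0).1 • DP τ))) θ₀ := by
    refine HasFDerivAt.fun_sum fun τ _ => ?_
    have hprod : HasFDerivAt (fun θ => ∏ i : Fin (T + 1), π θ (τ i).1 (τ i).2) (DP τ) θ₀ :=
      HasFDerivAt.finset_prod fun i _ => hdiff (τ i).1 (τ i).2
    exact ((hprod.const_mul (μ (τ 0).1)).mul_const (C2 τ)).mul_const (R τ)
  refine hD.congr_fderiv ?_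
  -- common canonical form
  set gbody : Fin (T + 1) → Finset (Fin (T + 1)) → (Fin (T + 1) → S × A) →
      (EuclideanSpace ℝ (Fin d) →L[ℝ] ℝ) :=
    fun t α τ => (pw μ Tr π θ₀ t T τ * rhat α τ) • Dπ (τ t).1 (τ t).2 with hgbody
  have E1 : ∑ τ : Fin (T + 1) → S × A, R τ • (C2 τ • (μ (τ 0).1 • DP τ))
      = ∑ t : Fin (T + 1), ∑ α ∈ 𝓘, ∑ τ : Fin (T + 1) → S × A, gbody t α τ := by
    rw [show (∑ τ : Fin (T + 1) → S × A, R τ • (C2 τ • (μ (τ 0).1 • DP τ)))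
        = ∑ τ : Fin (T + 1) → S × A, ∑ t : Fin (T + 1), ∑ α ∈ 𝓘, gbody t α τ from ?_,
      Finset.sum_comm]
    · exact Finset.sum_congr rfl fun t _ => Finset.sum_comm
    refine Finset.sum_congr rfl fun τ _ => ?_
    rw [hDP]
    rw [Finset.smul_sum, Finset.smul_sum, Finset.smul_sum]
    refine Finset.sum_congr rfl fun i _ => ?_
    rw [smul_smul, smul_smul, smul_smul, hgbody]
    simp only
    rw [← Finset.sum_smul, ← Finset.mul_sum]
    congr 1
    rw [hpw_eq, hR]
    ring
  have E2 : (∑ τ : Fin (T + 1) → S × A, trajProb μ Tr π θ₀ τ •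
        ∑ t : Fin (T + 1),
          (∑ α ∈ 𝓘.filter (fun α => (t : WithBot (Fin (T + 1))) ≤ α.max), rhat α τ) •
            score π Dπ θ₀ t τ)
      = ∑ t : Fin (T + 1), ∑ α ∈ 𝓘.filter (fun α => (t : WithBot (Fin (T + 1))) ≤ α.max),
          ∑ τ : Fin (T + 1) → S × A, gbody t α τ := by
    rw [show (∑ τ : Fin (T + 1) → S × A, trajProb μ Tr π θ₀ τ •
        ∑ t : Fin (T + 1),
          (∑ α ∈ 𝓘.filter (fun α => (t : WithBot (Fin (T + 1))) ≤ α.max), rhat α τ) •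
            score π Dπ θ₀ t τ)
        = ∑ τ : Fin (T + 1) → S × A, ∑ t : Fin (T + 1),
            ∑ α ∈ 𝓘.filter (fun α => (t : WithBot (Fin (T + 1))) ≤ α.max), gbody t α τ from ?_,
      Finset.sum_comm]
    · exact Finset.sum_congr rfl fun t _ => Finset.sum_comm
    refine Finset.sum_congr rfl fun τ _ => ?_
    rw [Finset.smul_sum]
    refine Finset.sum_congr rfl fun t _ => ?_
    unfold score
    rw [smul_smul, smul_smul, hgbody]
    simp only
    rw [← Finset.sum_smul, ← Finset.mul_sum]
    congr 1
    have hne0 : π θ₀ (τ t).1 (τ t).2 ≠ 0 := (hπpos θ₀ (τ t).1 (τ t).2).ne'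
    rw [hpwtraj t τ]
    field_simp
  have E3 : ∀ (t : Fin (T + 1)) (α : Finset (Fin (T + 1))), α ∈ 𝓘 →
      ¬ ((t : WithBot (Fin (T + 1))) ≤ α.max) →
      ∑ τ : Fin (T + 1) → S × A, gbody t α τ = 0 := by
    intro t α hα hmax
    have hlt : ∀ i ∈ α, i < t := by
      intro i hi
      have h1 : (i : WithBot (Fin (T + 1))) ≤ α.max := Finset.le_max hi
      have h2 : α.max < (t : WithBot (Fin (T + 1))) := not_le.mp hmax
      exact_mod_cast h1.trans_lt h2
    have hfα : ∀ τ τ' : Fin (T + 1) → S × A, (∀ i : Fin (T + 1), i < t → τ i = τ' i) →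
        rhat α τ = rhat α τ' := fun τ τ' h => hloc α hα τ τ' fun i hi => h i (hlt i hi)
    have := pw_sum_zero μ Tr π Dπ θ₀ hTr1 hπ1 hdiff hS hA t (rhat α) hfα T t.is_le le_rfl
    rw [← this]
    refine Finset.sum_congr rfl fun τ _ => ?_
    rw [hgbody]
    simp only
    rw [smul_smul]
  rw [E2, E1]
  refine Finset.sum_congr rfl fun t _ => ?_
  refine (Finset.sum_subset (Finset.filter_subset _ _) fun α hα hnot => ?_).symm
  refine E3 t α hα fun h => hnot ?_
  exact Finset.mem_filter.mpr ⟨hα, h⟩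
end

section
/- (Control-variate form) With r̂_{¬t}(τ) = ∑_{α ∉ Γ_t*} r̂(s_α, a_α), where Γ_t* = { α ∈ 𝓘 : max(α) ≥ t }, the true policy gradient equals ∇_θ E_{p_θ}[R(τ)] = E_{p_θ}[ ∑_{t=0}^{T} (R(τ) − r̂_{¬t}(τ)) ∇_θ log π_θ(a_t|s_t) ]. -/
open scoped BigOperators

/-- Marginalizing one coordinate: if two summands have equal partial sums over every
single-coordinate update, their total sums agree. -/
lemma sum_update_eq {ι X E : Type*} [Fintype ι] [DecidableEq ι] [Fintype X] [Nonempty X]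
    [AddCommMonoid E] (j : ι) (F F' : (ι → X) → E)
    (h : ∀ τ : ι → X, ∑ x : X, F (Function.update τ j x) = ∑ x : X, F' (Function.update τ j x)) :
    ∑ τ : ι → X, F τ = ∑ τ : ι → X, F' τ := by
  classical
  have H : ∀ G : (ι → X) → E, ∑ τ : ι → X, G τ
      = ∑ g : { i // i ≠ j } → X, ∑ x : X, G ((Equiv.funSplitAt j X).symm (x, g)) := by
    intro G
    rw [← Equiv.sum_comp (Equiv.funSplitAt j X).symm G, Fintype.sum_prod_type, Finset.sum_comm]
  rw [H F, H F']
  refine Finset.sum_congr rfl fun g _ => ?_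
  set τ₀ : ι → X := (Equiv.funSplitAt j X).symm (Classical.arbitrary X, g) with hτ₀
  have key : ∀ x : X, (Equiv.funSplitAt j X).symm (x, g) = Function.update τ₀ j x := by
    intro x
    funext i
    by_cases hi : i = j
    · subst hi
      simp [τ₀, Equiv.funSplitAt, Equiv.piSplitAt, Function.update]
    · simp [τ₀, Equiv.funSplitAt, Equiv.piSplitAt, Function.update, hi]
  simp only [key]
  exact h τ₀

/-- The partially-marginalized trajectory weight: policy/transition factors are kept
up to time `k`, later coordinates carry the uniform weight. -/
noncomputable def Qaux {S A : Type} [Fintype S] [Fintype A] {d T : ℕ}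
    (μ : S → ℝ) (Tr : S → A → S → ℝ)
    (π : EuclideanSpace ℝ (Fin d) → S → A → ℝ)
    (θ₀ : EuclideanSpace ℝ (Fin d)) (k : ℕ) (τ : Fin (T + 1) → S × A) : ℝ :=
  μ (τ 0).1 *
    (∏ u : Fin (T + 1), if (u : ℕ) ≤ k then π θ₀ (τ u).1 (τ u).2
      else (Fintype.card (S × A) : ℝ)⁻¹) *
    ∏ u : Fin T, if (u : ℕ) < k then Tr (τ u.castSucc).1 (τ u.castSucc).2 (τ u.succ).1 else 1

section Aux

variable {S A : Type} [Fintype S] [Fintype A] {d T : ℕ}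
    (μ : S → ℝ) (Tr : S → A → S → ℝ)
    (π : EuclideanSpace ℝ (Fin d) → S → A → ℝ)
    (Dπ : S → A → (EuclideanSpace ℝ (Fin d) →L[ℝ] ℝ))
    (θ₀ : EuclideanSpace ℝ (Fin d))

lemma inner_zero (hπpos : ∀ θ s a, 0 < π θ s a)
    (hD0 : ∀ s, ∑ a : A, Dπ s a = 0) (c : S → ℝ) (K : ℝ) :
    ∑ x : S × A, (c x.1 * (π θ₀ x.1 x.2 * K)) • ((π θ₀ x.1 x.2)⁻¹ • Dπ x.1 x.2) = 0 := by
  rw [Fintype.sum_prod_type]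
  have : ∀ s : S, ∑ a : A, (c s * (π θ₀ s a * K)) • ((π θ₀ s a)⁻¹ • Dπ s a) = 0 := by
    intro s
    have h1 : ∀ a : A, (c s * (π θ₀ s a * K)) • ((π θ₀ s a)⁻¹ • Dπ s a)
        = (c s * K) • Dπ s a := by
      intro a
      rw [smul_smul]
      congr 1
      field_simp [(hπpos θ₀ s a).ne']
    simp only [h1, ← Finset.smul_sum, hD0 s, smul_zero]
  simp only [this, Finset.sum_const_zero]

lemma Qstep [Nonempty S] [Nonempty A]
    (hπ1 : ∀ θ s, ∑ a, π θ s a = 1) (hTr1 : ∀ s a, ∑ s', Tr s a s' = 1)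
    (k : ℕ) (hk : k < T) (t : Fin (T + 1)) (ht : (t : ℕ) ≤ k)
    (g : (Fin (T + 1) → S × A) → ℝ)
    (hg : ∀ τ τ' : Fin (T + 1) → S × A,
      (∀ i : Fin (T + 1), (i : ℕ) < (t : ℕ) → τ i = τ' i) → g τ = g τ') :
    ∑ τ : Fin (T + 1) → S × A, (Qaux μ Tr π θ₀ (k + 1) τ * g τ) • score π Dπ θ₀ t τ
      = ∑ τ : Fin (T + 1) → S × A, (Qaux μ Tr π θ₀ k τ * g τ) • score π Dπ θ₀ t τ := by
  classical
  set ν : ℝ := (Fintype.card (S × A) : ℝ)⁻¹ with hν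
  set j : Fin (T + 1) := ⟨k + 1, by omega⟩ with hj
  apply sum_update_eq j
  intro τ
  have hupd : ∀ (x : S × A) (i : Fin (T + 1)), i ≠ j → Function.update τ j x i = τ i :=
    fun x i h => Function.update_of_ne h x τ
  set ck : Fin (T + 1) := ⟨k, by omega⟩ with hck
  set u₁ : Fin T := ⟨k, hk⟩ with hu₁
  set Pπ : ℝ := ∏ u ∈ Finset.univ.erase j,
      (if (u : ℕ) ≤ k then π θ₀ (τ u).1 (τ u).2 else ν) with hPπ
  set PT : ℝ := ∏ u ∈ Finset.univ.erase u₁,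
      (if (u : ℕ) < k then Tr (τ u.castSucc).1 (τ u.castSucc).2 (τ u.succ).1 else 1) with hPT
  have hμ0 : ∀ x : S × A, (Function.update τ j x 0).1 = (τ 0).1 := by
    intro x; rw [hupd x 0 (Fin.ne_of_val_ne (by simp [hj]))]
  have hπ1prod : ∀ x : S × A,
      (∏ u : Fin (T + 1), if (u : ℕ) ≤ k + 1
        then π θ₀ ((Function.update τ j x) u).1 ((Function.update τ j x) u).2 else ν)
      = π θ₀ x.1 x.2 * Pπ := by
    intro x
    rw [← Finset.mul_prod_erase Finset.univ _ (Finset.mem_univ j)]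
    congr 1
    · rw [if_pos (by simp [hj]), Function.update_self]
    · refine Finset.prod_congr rfl fun u hu => ?_
      have huj : u ≠ j := (Finset.mem_erase.mp hu).1
      have hval : (u : ℕ) ≠ k + 1 := fun h => huj (Fin.ext (by simp [hj, h]))
      rw [hupd x u huj]
      by_cases h2 : (u : ℕ) ≤ k
      · rw [if_pos (by omega), if_pos h2]
      · rw [if_neg (by omega), if_neg h2]
  have hπ2prod : ∀ x : S × A,
      (∏ u : Fin (T + 1), if (u : ℕ) ≤ k
        then π θ₀ ((Function.update τ j x) u).1 ((Function.update τ j x) u).2 else ν)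
      = ν * Pπ := by
    intro x
    rw [← Finset.mul_prod_erase Finset.univ _ (Finset.mem_univ j)]
    congr 1
    · rw [if_neg (by simp [hj])]
    · refine Finset.prod_congr rfl fun u hu => ?_
      have huj : u ≠ j := (Finset.mem_erase.mp hu).1
      rw [hupd x u huj]
  have hcastne : ∀ (u : Fin T), (u : ℕ) ≠ k + 1 → u.castSucc ≠ j :=
    fun u h => Fin.ne_of_val_ne (by simpa [hj] using h)
  have hsuccne : ∀ (u : Fin T), (u : ℕ) ≠ k → u.succ ≠ j :=
    fun u h => Fin.ne_of_val_ne (by simp [hj]; omega)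
  have hT1prod : ∀ x : S × A,
      (∏ u : Fin T, if (u : ℕ) < k + 1
        then Tr ((Function.update τ j x) u.castSucc).1 ((Function.update τ j x) u.castSucc).2
          ((Function.update τ j x) u.succ).1 else 1)
      = Tr (τ ck).1 (τ ck).2 x.1 * PT := by
    intro x
    rw [← Finset.mul_prod_erase Finset.univ _ (Finset.mem_univ u₁)]
    congr 1
    · rw [if_pos (by simp [hu₁])]
      have h1 : u₁.castSucc = ck := rfl
      have h2 : u₁.succ = j := rfl
      rw [h1, h2, Function.update_self, hupd x ck (Fin.ne_of_val_ne (by simp [hck, hj]))]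
    · refine Finset.prod_congr rfl fun u hu => ?_
      have huu : u ≠ u₁ := (Finset.mem_erase.mp hu).1
      have hval : (u : ℕ) ≠ k := fun h => huu (Fin.ext (by simp [hu₁, h]))
      by_cases h2 : (u : ℕ) < k
      · rw [if_pos (by omega), if_pos h2,
          hupd x u.castSucc (hcastne u (by simp; omega)),
          hupd x u.succ (hsuccne u (by simp; omega))]
      · rw [if_neg (by omega), if_neg h2]
  have hT2prod : ∀ x : S × A,
      (∏ u : Fin T, if (u : ℕ) < k
        then Tr ((Function.update τ j x) u.castSucc).1 ((Function.update τ j x) u.castSucc).2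
          ((Function.update τ j x) u.succ).1 else 1)
      = 1 * PT := by
    intro x
    rw [← Finset.mul_prod_erase Finset.univ _ (Finset.mem_univ u₁)]
    congr 1
    · rw [if_neg (by simp [hu₁])]
    · refine Finset.prod_congr rfl fun u hu => ?_
      have huu : u ≠ u₁ := (Finset.mem_erase.mp hu).1
      have hval : (u : ℕ) ≠ k := fun h => huu (Fin.ext (by simp [hu₁, h]))
      by_cases h2 : (u : ℕ) < k
      · rw [if_pos h2, if_pos h2,
          hupd x u.castSucc (hcastne u (by simp; omega)),
          hupd x u.succ (hsuccne u (by simp; omega))]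
      · rw [if_neg h2, if_neg h2]
  have hgu : ∀ x : S × A, g (Function.update τ j x) = g τ := by
    intro x
    exact hg _ _ fun i hi => hupd x i (Fin.ne_of_val_ne (by simp [hj]; omega))
  have hscore : ∀ x : S × A, score π Dπ θ₀ t (Function.update τ j x) = score π Dπ θ₀ t τ := by
    intro x
    unfold score
    rw [hupd x t (Fin.ne_of_val_ne (by simp [hj]; omega))]
  simp only [Qaux, ← hν, hμ0, hπ1prod, hπ2prod, hT1prod, hT2prod, hgu, hscore]
  rw [← Finset.sum_smul, ← Finset.sum_smul]
  congr 1
  have hL : ∑ x : S × A,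
      μ (τ 0).1 * (π θ₀ x.1 x.2 * Pπ) * (Tr (τ ck).1 (τ ck).2 x.1 * PT) * g τ
      = (μ (τ 0).1 * Pπ * PT * g τ) *
        ∑ x : S × A, π θ₀ x.1 x.2 * Tr (τ ck).1 (τ ck).2 x.1 := by
    rw [Finset.mul_sum]
    exact Finset.sum_congr rfl fun x _ => by ring
  have hsum1 : ∑ x : S × A, π θ₀ x.1 x.2 * Tr (τ ck).1 (τ ck).2 x.1 = 1 := by
    rw [Fintype.sum_prod_type]
    have : ∀ s : S, ∑ a : A, π θ₀ s a * Tr (τ ck).1 (τ ck).2 s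
        = Tr (τ ck).1 (τ ck).2 s := by
      intro s
      rw [← Finset.sum_mul, hπ1 θ₀ s, one_mul]
    simp only [this]
    exact hTr1 _ _
  have hR : ∑ x : S × A, μ (τ 0).1 * (ν * Pπ) * (1 * PT) * g τ
      = (μ (τ 0).1 * Pπ * PT * g τ) * ((Fintype.card (S × A) : ℝ) * ν) := by
    rw [Finset.sum_const, Finset.card_univ, nsmul_eq_mul]
    ring
  have hcard : ((Fintype.card (S × A) : ℝ)) * ν = 1 := by
    rw [hν, mul_inv_cancel₀]
    exact_mod_cast Fintype.card_ne_zero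
  rw [hL, hsum1, hR, hcard]

lemma Qbase (hπpos : ∀ θ s a, 0 < π θ s a)
    (hD0 : ∀ s, ∑ a : A, Dπ s a = 0) (t : Fin (T + 1))
    (g : (Fin (T + 1) → S × A) → ℝ)
    (hg : ∀ τ τ' : Fin (T + 1) → S × A,
      (∀ i : Fin (T + 1), (i : ℕ) < (t : ℕ) → τ i = τ' i) → g τ = g τ')
    [Nonempty S] [Nonempty A] :
    ∑ τ : Fin (T + 1) → S × A, (Qaux μ Tr π θ₀ (t : ℕ) τ * g τ) • score π Dπ θ₀ t τ = 0 := by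
  classical
  set ν : ℝ := (Fintype.card (S × A) : ℝ)⁻¹ with hν
  have h0 := sum_update_eq t
    (fun τ : Fin (T + 1) → S × A => (Qaux μ Tr π θ₀ (t : ℕ) τ * g τ) • score π Dπ θ₀ t τ)
    (fun _ => (0 : EuclideanSpace ℝ (Fin d) →L[ℝ] ℝ)) ?_
  · simpa using h0
  intro τ
  simp only [Finset.sum_const_zero]
  have hupd : ∀ (x : S × A) (i : Fin (T + 1)), i ≠ t → Function.update τ t x i = τ i :=
    fun x i h => Function.update_of_ne h x τ
  set Pπ : ℝ := ∏ u ∈ Finset.univ.erase t,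
      (if (u : ℕ) ≤ (t : ℕ) then π θ₀ (τ u).1 (τ u).2 else ν) with hPπ
  have hπprod : ∀ x : S × A,
      (∏ u : Fin (T + 1), if (u : ℕ) ≤ (t : ℕ)
        then π θ₀ ((Function.update τ t x) u).1 ((Function.update τ t x) u).2 else ν)
      = π θ₀ x.1 x.2 * Pπ := by
    intro x
    rw [← Finset.mul_prod_erase Finset.univ _ (Finset.mem_univ t)]
    congr 1
    · rw [if_pos le_rfl, Function.update_self]
    · refine Finset.prod_congr rfl fun u hu => ?_
      have huj : u ≠ t := (Finset.mem_erase.mp hu).1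
      rw [hupd x u huj]
  have hgu : ∀ x : S × A, g (Function.update τ t x) = g τ := by
    intro x
    exact hg _ _ fun i hi => hupd x i (Fin.ne_of_val_ne (by omega))
  have hscoreu : ∀ x : S × A, score π Dπ θ₀ t (Function.update τ t x)
      = (π θ₀ x.1 x.2)⁻¹ • Dπ x.1 x.2 := by
    intro x
    unfold score
    rw [Function.update_self]
  by_cases ht0 : (t : ℕ) = 0
  · -- t = 0 : no transition factors, initial distribution depends on x
    have hTprod : ∀ x : S × A,
        (∏ u : Fin T, if (u : ℕ) < (t : ℕ)
          then Tr ((Function.update τ t x) u.castSucc).1 ((Function.update τ t x) u.castSucc).2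
            ((Function.update τ t x) u.succ).1 else 1) = 1 := by
      intro x
      refine Finset.prod_eq_one fun u _ => if_neg (by omega)
    have hμx : ∀ x : S × A, ((Function.update τ t x) 0).1 = x.1 := by
      intro x
      have : (0 : Fin (T + 1)) = t := Fin.ext (by simpa using ht0.symm)
      rw [this, Function.update_self]
    simp only [Qaux, ← hν, hπprod, hTprod, hgu, hscoreu, hμx]
    have hform : ∀ x : S × A,
        (μ x.1 * (π θ₀ x.1 x.2 * Pπ) * 1 * g τ) • ((π θ₀ x.1 x.2)⁻¹ • Dπ x.1 x.2)
        = ((fun s => μ s) x.1 * (π θ₀ x.1 x.2 * (Pπ * g τ))) • ((π θ₀ x.1 x.2)⁻¹ • Dπ x.1 x.2) := by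
      intro x; congr 1; ring
    simp only [hform]
    exact inner_zero π Dπ θ₀ hπpos hD0 _ _
  · -- t ≥ 1 : transition factor into time t depends on x
    have htpos : 1 ≤ (t : ℕ) := by omega
    set u₁ : Fin T := ⟨(t : ℕ) - 1, by omega⟩ with hu₁
    set cprev : Fin (T + 1) := ⟨(t : ℕ) - 1, by omega⟩ with hcprev
    set PT : ℝ := ∏ u ∈ Finset.univ.erase u₁,
        (if (u : ℕ) < (t : ℕ) then Tr (τ u.castSucc).1 (τ u.castSucc).2 (τ u.succ).1 else 1)
      with hPT
    have hμx : ∀ x : S × A, ((Function.update τ t x) 0).1 = (τ 0).1 := by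
      intro x; rw [hupd x 0 (Fin.ne_of_val_ne (by simp; omega))]
    have hTprod : ∀ x : S × A,
        (∏ u : Fin T, if (u : ℕ) < (t : ℕ)
          then Tr ((Function.update τ t x) u.castSucc).1 ((Function.update τ t x) u.castSucc).2
            ((Function.update τ t x) u.succ).1 else 1)
        = Tr (τ cprev).1 (τ cprev).2 x.1 * PT := by
      intro x
      rw [← Finset.mul_prod_erase Finset.univ _ (Finset.mem_univ u₁)]
      congr 1
      · rw [if_pos (show ((u₁ : Fin T) : ℕ) < (t : ℕ) from show (t : ℕ) - 1 < t by omega)]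
        have h1 : u₁.castSucc = cprev := rfl
        have h2 : u₁.succ = t := Fin.ext (show (t : ℕ) - 1 + 1 = t by omega)
        rw [h1, h2, Function.update_self, hupd x cprev (Fin.ne_of_val_ne (show (t : ℕ) - 1 ≠ t by omega))]
      · refine Finset.prod_congr rfl fun u hu => ?_
        have huu : u ≠ u₁ := (Finset.mem_erase.mp hu).1
        have hval : (u : ℕ) ≠ (t : ℕ) - 1 := fun h => huu (Fin.ext (by simp [hu₁, h]))
        by_cases h2 : (u : ℕ) < (t : ℕ)
        · rw [if_pos h2, if_pos h2,
            hupd x u.castSucc (Fin.ne_of_val_ne (by simp; omega)),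
            hupd x u.succ (Fin.ne_of_val_ne (by simp; omega))]
        · rw [if_neg h2, if_neg h2]
    simp only [Qaux, ← hν, hπprod, hTprod, hgu, hscoreu, hμx]
    have hform : ∀ x : S × A,
        (μ (τ 0).1 * (π θ₀ x.1 x.2 * Pπ) * (Tr (τ cprev).1 (τ cprev).2 x.1 * PT) * g τ)
            • ((π θ₀ x.1 x.2)⁻¹ • Dπ x.1 x.2)
        = ((fun s => Tr (τ cprev).1 (τ cprev).2 s) x.1 *
            (π θ₀ x.1 x.2 * (μ (τ 0).1 * Pπ * PT * g τ))) • ((π θ₀ x.1 x.2)⁻¹ • Dπ x.1 x.2) := by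
      intro x; congr 1; ring
    simp only [hform]
    exact inner_zero π Dπ θ₀ hπpos hD0 _ _

lemma keylemma [Nonempty S] [Nonempty A]
    (hπpos : ∀ θ s a, 0 < π θ s a) (hπ1 : ∀ θ s, ∑ a, π θ s a = 1)
    (hTr1 : ∀ s a, ∑ s', Tr s a s' = 1)
    (hD0 : ∀ s, ∑ a : A, Dπ s a = 0) (t : Fin (T + 1))
    (g : (Fin (T + 1) → S × A) → ℝ)
    (hg : ∀ τ τ' : Fin (T + 1) → S × A,
      (∀ i : Fin (T + 1), (i : ℕ) < (t : ℕ) → τ i = τ' i) → g τ = g τ') :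
    ∑ τ : Fin (T + 1) → S × A, (trajProb μ Tr π θ₀ τ * g τ) • score π Dπ θ₀ t τ = 0 := by
  have hQT : ∀ τ : Fin (T + 1) → S × A, trajProb μ Tr π θ₀ τ = Qaux μ Tr π θ₀ T τ := by
    intro τ
    unfold trajProb Qaux
    congr 1
    · congr 1
      exact Finset.prod_congr rfl fun u _ => (if_pos (Fin.is_le u)).symm
    · exact Finset.prod_congr rfl fun u _ => (if_pos u.isLt).symm
  have tele : ∀ m : ℕ, (t : ℕ) + m ≤ T →
      ∑ τ : Fin (T + 1) → S × A, (Qaux μ Tr π θ₀ ((t : ℕ) + m) τ * g τ) • score π Dπ θ₀ t τ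
        = 0 := by
    intro m
    induction m with
    | zero => intro _; simpa using Qbase μ Tr π Dπ θ₀ hπpos hD0 t g hg
    | succ n ih =>
      intro h
      have heq : (t : ℕ) + (n + 1) = ((t : ℕ) + n) + 1 := by omega
      rw [heq, Qstep μ Tr π Dπ θ₀ hπ1 hTr1 ((t : ℕ) + n) (by omega) t (by omega) g hg]
      exact ih (by omega)
  have hfin := tele (T - (t : ℕ)) (by omega)
  rw [show (t : ℕ) + (T - (t : ℕ)) = T from by have := Fin.is_le t; omega] at hfin
  rw [← hfin]
  exact Finset.sum_congr rfl fun τ _ => by rw [hQT τ]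

end Aux

theorem stmt6 {S A : Type} [Fintype S] [Fintype A] {d T : ℕ}
    (μ : S → ℝ) (Tr : S → A → S → ℝ)
    (π : EuclideanSpace ℝ (Fin d) → S → A → ℝ)
    (Dπ : S → A → (EuclideanSpace ℝ (Fin d) →L[ℝ] ℝ))
    (θ₀ : EuclideanSpace ℝ (Fin d))
    (hμ0 : ∀ s, 0 ≤ μ s) (hμ1 : ∑ s, μ s = 1)
    (hTr0 : ∀ s a s', 0 ≤ Tr s a s') (hTr1 : ∀ s a, ∑ s', Tr s a s' = 1)
    (hπpos : ∀ θ s a, 0 < π θ s a) (hπ1 : ∀ θ s, ∑ a, π θ s a = 1)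
    (hdiff : ∀ s a, HasFDerivAt (fun θ => π θ s a) (Dπ s a) θ₀)
    (𝓘 : Finset (Finset (Fin (T + 1))))
    (hne : ∀ α ∈ 𝓘, α.Nonempty)
    (rhat : Finset (Fin (T + 1)) → (Fin (T + 1) → S × A) → ℝ)
    (hloc : ∀ α ∈ 𝓘, ∀ τ τ' : Fin (T + 1) → S × A,
      (∀ i ∈ α, τ i = τ' i) → rhat α τ = rhat α τ')
    (R : (Fin (T + 1) → S × A) → ℝ) :
    HasFDerivAt (fun θ => ∑ τ : Fin (T + 1) → S × A, trajProb μ Tr π θ τ * R τ)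
      (∑ τ : Fin (T + 1) → S × A, trajProb μ Tr π θ₀ τ •
        ∑ t : Fin (T + 1),
          (R τ - ∑ α ∈ 𝓘.filter (fun α => α.max < (t : WithBot (Fin (T + 1)))),
              rhat α τ) • score π Dπ θ₀ t τ) θ₀ := by
  classical
  have hS : Nonempty S := by
    rcases isEmpty_or_nonempty S with h | h
    · rw [Finset.univ_eq_empty, Finset.sum_empty] at hμ1; norm_num at hμ1
    · exact h
  have hA : Nonempty A := by
    rcases isEmpty_or_nonempty A with h | h
    · have := hπ1 θ₀ (Classical.arbitrary S)
      rw [Finset.univ_eq_empty, Finset.sum_empty] at this; norm_num at this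
    · exact h
  have hD0 : ∀ s, ∑ a : A, Dπ s a = 0 := by
    intro s
    have h1 : HasFDerivAt (fun θ => ∑ a : A, π θ s a) (∑ a : A, Dπ s a) θ₀ :=
      HasFDerivAt.fun_sum fun a _ => hdiff s a
    have h2 : HasFDerivAt (fun _ : EuclideanSpace ℝ (Fin d) => (1 : ℝ))
        (0 : EuclideanSpace ℝ (Fin d) →L[ℝ] ℝ) θ₀ := hasFDerivAt_const 1 θ₀
    have h3 : (fun θ => ∑ a : A, π θ s a) = fun _ : EuclideanSpace ℝ (Fin d) => (1 : ℝ) :=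
      funext fun θ => hπ1 θ s
    rw [h3] at h1
    exact h1.unique h2
  -- the derivative of each trajectory probability
  have hP : ∀ τ : Fin (T + 1) → S × A,
      HasFDerivAt (fun θ => trajProb μ Tr π θ τ)
        (trajProb μ Tr π θ₀ τ • ∑ t : Fin (T + 1), score π Dπ θ₀ t τ) θ₀ := by
    intro τ
    have h1 : HasFDerivAt (fun θ => ∏ u : Fin (T + 1), π θ (τ u).1 (τ u).2)
        (∑ u : Fin (T + 1), (∏ v ∈ Finset.univ.erase u, π θ₀ (τ v).1 (τ v).2)
          • Dπ (τ u).1 (τ u).2) θ₀ :=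
      HasFDerivAt.finset_prod fun u _ => hdiff (τ u).1 (τ u).2
    have h2 := (h1.const_mul (μ (τ 0).1)).mul_const
      (∏ u : Fin T, Tr (τ u.castSucc).1 (τ u.castSucc).2 (τ u.succ).1)
    have h3 : (fun θ => (μ (τ 0).1 * ∏ u : Fin (T + 1), π θ (τ u).1 (τ u).2) *
        ∏ u : Fin T, Tr (τ u.castSucc).1 (τ u.castSucc).2 (τ u.succ).1)
        = fun θ => trajProb μ Tr π θ τ := by
      funext θ; rw [trajProb]
    rw [h3] at h2
    refine h2.congr_fderiv (Eq.symm ?_)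
    rw [Finset.smul_sum, Finset.smul_sum, Finset.smul_sum]
    refine Finset.sum_congr rfl fun u _ => ?_
    unfold score
    rw [smul_smul, smul_smul, smul_smul]
    congr 1
    have hprod := Finset.prod_erase_mul Finset.univ
      (fun v => π θ₀ (τ v).1 (τ v).2) (Finset.mem_univ u)
    rw [trajProb, ← hprod]
    field_simp [(hπpos θ₀ (τ u).1 (τ u).2).ne']
  have hD : HasFDerivAt (fun θ => ∑ τ : Fin (T + 1) → S × A, trajProb μ Tr π θ τ * R τ)
      (∑ τ : Fin (T + 1) → S × A,
        R τ • (trajProb μ Tr π θ₀ τ • ∑ t : Fin (T + 1), score π Dπ θ₀ t τ)) θ₀ :=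
    HasFDerivAt.fun_sum fun τ _ => (hP τ).mul_const (R τ)
  convert hD using 1
  have hzero : ∀ (t : Fin (T + 1)) (α : Finset (Fin (T + 1))),
      α ∈ 𝓘.filter (fun α => α.max < (t : WithBot (Fin (T + 1)))) →
      ∑ τ : Fin (T + 1) → S × A, (trajProb μ Tr π θ₀ τ * rhat α τ) • score π Dπ θ₀ t τ = 0 := by
    intro t α hα
    obtain ⟨hα𝓘, hαmax⟩ := Finset.mem_filter.mp hα
    apply keylemma μ Tr π Dπ θ₀ hπpos hπ1 hTr1 hD0 t (rhat α)
    intro τ τ' hagree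
    apply hloc α hα𝓘
    intro i hi
    have h1 : (i : WithBot (Fin (T + 1))) ≤ α.max := Finset.le_max hi
    have h2 : i < t := WithBot.coe_lt_coe.mp (lt_of_le_of_lt h1 hαmax)
    exact hagree i h2
  have expand : ∀ τ : Fin (T + 1) → S × A,
      trajProb μ Tr π θ₀ τ • ∑ t : Fin (T + 1),
        (R τ - ∑ α ∈ 𝓘.filter (fun α => α.max < (t : WithBot (Fin (T + 1)))), rhat α τ)
          • score π Dπ θ₀ t τ
      = R τ • (trajProb μ Tr π θ₀ τ • ∑ t : Fin (T + 1), score π Dπ θ₀ t τ)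
        - ∑ t : Fin (T + 1),
            (trajProb μ Tr π θ₀ τ *
              ∑ α ∈ 𝓘.filter (fun α => α.max < (t : WithBot (Fin (T + 1)))), rhat α τ)
              • score π Dπ θ₀ t τ := by
    intro τ
    rw [Finset.smul_sum, Finset.smul_sum, Finset.smul_sum, ← Finset.sum_sub_distrib]
    refine Finset.sum_congr rfl fun t _ => ?_
    rw [smul_smul, smul_smul]
    refine (congrArg (· • score π Dπ θ₀ t τ) ?_).trans (sub_smul (R τ * trajProb μ Tr π θ₀ τ)
      (trajProb μ Tr π θ₀ τ * ∑ α ∈ 𝓘.filter (fun α => α.max < (t : WithBot (Fin (T + 1)))), rhat α τ)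
      (score π Dπ θ₀ t τ))
    ring
  have hZ : ∑ τ : Fin (T + 1) → S × A, ∑ t : Fin (T + 1),
      (trajProb μ Tr π θ₀ τ *
        ∑ α ∈ 𝓘.filter (fun α => α.max < (t : WithBot (Fin (T + 1)))), rhat α τ)
        • score π Dπ θ₀ t τ = 0 := by
    have h1 : ∀ (τ : Fin (T + 1) → S × A) (t : Fin (T + 1)),
        (trajProb μ Tr π θ₀ τ *
          ∑ α ∈ 𝓘.filter (fun α => α.max < (t : WithBot (Fin (T + 1)))), rhat α τ)
          • score π Dπ θ₀ t τ
        = ∑ α ∈ 𝓘.filter (fun α => α.max < (t : WithBot (Fin (T + 1)))),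
            (trajProb μ Tr π θ₀ τ * rhat α τ) • score π Dπ θ₀ t τ := by
      intro τ t
      rw [Finset.mul_sum, Finset.sum_smul]
    simp only [h1]
    rw [Finset.sum_comm]
    refine Finset.sum_eq_zero fun t _ => ?_
    rw [Finset.sum_comm]
    exact Finset.sum_eq_zero fun α hα => hzero t α hα
  calc ∑ τ : Fin (T + 1) → S × A, trajProb μ Tr π θ₀ τ •
        ∑ t : Fin (T + 1),
          (R τ - ∑ α ∈ 𝓘.filter (fun α => α.max < (t : WithBot (Fin (T + 1)))), rhat α τ)
            • score π Dπ θ₀ t τ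
      = ∑ τ : Fin (T + 1) → S × A,
          (R τ • (trajProb μ Tr π θ₀ τ • ∑ t : Fin (T + 1), score π Dπ θ₀ t τ)
            - ∑ t : Fin (T + 1),
                (trajProb μ Tr π θ₀ τ *
                  ∑ α ∈ 𝓘.filter (fun α => α.max < (t : WithBot (Fin (T + 1)))), rhat α τ)
                  • score π Dπ θ₀ t τ) := Finset.sum_congr rfl fun τ _ => expand τ
    _ = ∑ τ : Fin (T + 1) → S × A,
          R τ • (trajProb μ Tr π θ₀ τ • ∑ t : Fin (T + 1), score π Dπ θ₀ t τ) := by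
        rw [Finset.sum_sub_distrib, hZ, sub_zero]
end
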